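/- arXiv:0805.2620 — 3 statements merged into one kernel-verified Lean document; each statement's English description precedes it below -/
import Mathlib

section
/- Let G be a finite game graph with Büchi states B, C = S \ B, C1 = { s ∈ S1 ∩ C | E(s) ⊆ C }, C2 = { s ∈ S2 ∩ C | E(s) ∩ C ≠ ∅ }, X = Attr2(C1 ∪ C2, G), and Z = X ∩ C. Then Tr ⊆ Z, where Tr = S \ Attr1(B,G). -/
open Classical

universe u

structure GameGraph (S : Type u) where
  E : S → Set S
  S1 : Set S
  succ_nonempty : ∀ s, (E s).Nonempty

namespace GameGraph

variable {S : Type u} (G : GameGraph S)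

/-- A (general, history-dependent) strategy: given a history and the current
state, choose a successor. -/
abbrev Strat := { f : List S → S → S // ∀ h s, f h s ∈ G.E s }

open Classical in
/-- The pair (history so far, current state) after `n` steps of the play from
`s` where player 1 uses `σ` (at states of `S1`) and player 2 uses `π`. -/
noncomputable def playPair (σ π : List S → S → S) (s : S) : ℕ → List S × S
  | 0 => ([], s)
  | n+1 =>
      let p := playPair σ π s n
      (p.1 ++ [p.2], if p.2 ∈ G.S1 then σ p.1 p.2 else π p.1 p.2)

/-- The unique play `ω(s,σ,π)`. -/
noncomputable def play (σ π : List S → S → S) (s : S) (n : ℕ) : S :=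
  (G.playPair σ π s n).2

/-- Lift a memoryless strategy to a general one. -/
def liftML (f : S → S) : List S → S → S := fun _ s => f s

def Reach (T : Set S) : Set (ℕ → S) := { ω | ∃ k, ω k ∈ T }

def Safe (F : Set S) : Set (ℕ → S) := { ω | ∀ k, ω k ∈ F }

/-- States occurring infinitely often in a play. -/
def InfOcc (ω : ℕ → S) : Set S := { t | ∀ N, ∃ k, N ≤ k ∧ ω k = t }

def Buchi (B : Set S) : Set (ℕ → S) := { ω | (InfOcc ω ∩ B).Nonempty }

def coBuchi (C : Set S) : Set (ℕ → S) := { ω | InfOcc ω ⊆ C }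

/-- Winning set of player 1 for objective `Φ`. -/
def W1 (Φ : Set (ℕ → S)) : Set S :=
  { s | ∃ σ : G.Strat, ∀ π : G.Strat, (G.play σ.1 π.1 s) ∈ Φ }

/-- Winning set of player 2 for objective `Ψ`. -/
def W2 (Ψ : Set (ℕ → S)) : Set S :=
  { s | ∃ π : G.Strat, ∀ σ : G.Strat, (G.play σ.1 π.1 s) ∈ Ψ }

/-- `U` is closed for player 1: player-1 states of `U` have all successors in
`U`, player-2 states of `U` have some successor in `U`. -/
def Closed1 (U : Set S) : Prop :=
  (∀ s ∈ U ∩ G.S1, G.E s ⊆ U) ∧ (∀ s ∈ U \ G.S1, (G.E s ∩ U).Nonempty)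

/-- `U` is closed for player 2. -/
def Closed2 (U : Set S) : Prop :=
  (∀ s ∈ U \ G.S1, G.E s ⊆ U) ∧ (∀ s ∈ U ∩ G.S1, (G.E s ∩ U).Nonempty)

/-- The inductive attractor sequence for player 1. -/
def AttrSeq1 (U : Set S) : ℕ → Set S
  | 0 => U
  | n+1 => AttrSeq1 U n
      ∪ { s | s ∈ G.S1 ∧ (G.E s ∩ AttrSeq1 U n).Nonempty }
      ∪ { s | s ∉ G.S1 ∧ G.E s ⊆ AttrSeq1 U n }

/-- Player-1 attractor of `U`. -/
def Attr1 (U : Set S) : Set S := ⋃ n, G.AttrSeq1 U n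

/-- The inductive attractor sequence for player 2. -/
def AttrSeq2 (U : Set S) : ℕ → Set S
  | 0 => U
  | n+1 => AttrSeq2 U n
      ∪ { s | s ∉ G.S1 ∧ (G.E s ∩ AttrSeq2 U n).Nonempty }
      ∪ { s | s ∈ G.S1 ∧ G.E s ⊆ AttrSeq2 U n }

/-- Player-2 attractor of `U`. -/
def Attr2 (U : Set S) : Set S := ⋃ n, G.AttrSeq2 U n

/-- Player-1 attractor sequence computed inside the region `X`
(i.e. in the restricted game `G ↾ X`). -/
def AttrSeq1In (X U : Set S) : ℕ → Set S
  | 0 => U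
  | n+1 => AttrSeq1In X U n
      ∪ { s | s ∈ X ∧ s ∈ G.S1 ∧ (G.E s ∩ AttrSeq1In X U n).Nonempty }
      ∪ { s | s ∈ X ∧ s ∉ G.S1 ∧ G.E s ∩ X ⊆ AttrSeq1In X U n }

/-- Player-1 attractor of `U` inside the region `X`. -/
def Attr1In (X U : Set S) : Set S := ⋃ n, G.AttrSeq1In X U n

/-- Player-2 attractor sequence computed inside the region `X`. -/
def AttrSeq2In (X U : Set S) : ℕ → Set S
  | 0 => U
  | n+1 => AttrSeq2In X U n
      ∪ { s | s ∈ X ∧ s ∉ G.S1 ∧ (G.E s ∩ AttrSeq2In X U n).Nonempty }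
      ∪ { s | s ∈ X ∧ s ∈ G.S1 ∧ G.E s ∩ X ⊆ AttrSeq2In X U n }

/-- Player-2 attractor of `U` inside the region `X`. -/
def Attr2In (X U : Set S) : Set S := ⋃ n, G.AttrSeq2In X U n

end GameGraph

open GameGraph

/-! A state outside `Attr1 B` is not in `B`. If player 1 owns it, none of its successors is in `B`
(otherwise player 1 could move into `B`), so it lies in `C1`; if player 2 owns it, some successor
escapes `Attr1 B ⊇ B` (otherwise, the game being finite, it would be attracted), so it lies in `C2`. Hence it lies in
`C1 ∪ C2 ⊆ X`. -/

namespace GameGraph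

variable {S : Type u} (G : GameGraph S) {U : Set S} {s : S}

theorem monotone_attrSeq1 (U : Set S) : Monotone (G.AttrSeq1 U) :=
  monotone_nat_of_le_succ fun _ => Set.subset_union_left.trans Set.subset_union_left

theorem subset_attr1 (U : Set S) : U ⊆ G.Attr1 U :=
  Set.subset_iUnion (G.AttrSeq1 U) 0

theorem subset_attr2 (U : Set S) : U ⊆ G.Attr2 U :=
  Set.subset_iUnion (G.AttrSeq2 U) 0

theorem mem_attr1_of_mem_S1 (hs : s ∈ G.S1) {t : S} (ht : t ∈ G.E s) (htU : t ∈ G.Attr1 U) :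
    s ∈ G.Attr1 U := by
  obtain ⟨n, hn⟩ := Set.mem_iUnion.mp htU
  exact Set.mem_iUnion.mpr ⟨n + 1, Or.inl (Or.inr ⟨hs, t, ht, hn⟩)⟩

theorem mem_attr1_of_notMem_S1 (hs : s ∉ G.S1) (hfin : (G.E s).Finite)
    (hsucc : G.E s ⊆ G.Attr1 U) : s ∈ G.Attr1 U := by
  obtain ⟨n, hn⟩ := (G.monotone_attrSeq1 U).directed_le.exists_mem_subset_of_finset_subset_biUnion
    (s := hfin.toFinset) (by simpa [Attr1] using hsucc)
  exact Set.mem_iUnion.mpr ⟨n + 1, Or.inr ⟨hs, by simpa using hn⟩⟩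

end GameGraph

/-- `Tr ⊆ Z` where `Z = Attr2(C1 ∪ C2, G) ∩ C`. -/
theorem Tr_subset_Z {S : Type u} [Finite S] (G : GameGraph S) (B : Set S) :
    let C : Set S := Bᶜ
    let C1 : Set S := { s | s ∈ G.S1 ∧ s ∈ C ∧ G.E s ⊆ C }
    let C2 : Set S := { s | s ∉ G.S1 ∧ s ∈ C ∧ (G.E s ∩ C).Nonempty }
    let X : Set S := G.Attr2 (C1 ∪ C2)
    let Z : Set S := X ∩ C
    (G.Attr1 B)ᶜ ⊆ Z := by
  intro C C1 C2 X Z s hs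
  have hsC : s ∈ C := fun hsB => hs (G.subset_attr1 B hsB)
  have hsC12 : s ∈ C1 ∪ C2 := by
    by_cases hs1 : s ∈ G.S1
    · refine Or.inl ⟨hs1, hsC, fun t ht htB => hs ?_⟩
      exact G.mem_attr1_of_mem_S1 hs1 ht (G.subset_attr1 B htB)
    · refine Or.inr ⟨hs1, hsC, ?_⟩
      by_contra hno
      refine hs (G.mem_attr1_of_notMem_S1 hs1 (Set.toFinite _) fun t ht => G.subset_attr1 B ?_)
      by_contra htB
      exact hno ⟨t, ht, htB⟩
  exact ⟨G.subset_attr2 _ hsC12, hsC⟩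
end

section
/- Let G be a finite game graph with Büchi states B, C = S \ B, C1 = { s ∈ S1 ∩ C | E(s) ⊆ C }, C2 = { s ∈ S2 ∩ C | E(s) ∩ C ≠ ∅ }, X = Attr2(C1 ∪ C2, G), Z = X ∩ C, D = { s ∈ S1 ∩ Z | E(s) ∩ (S \ Z) ≠ ∅ } ∪ { s ∈ S2 ∩ Z | E(s) ⊆ S \ Z } ∪ (X \ Z), and L = Attr1(D, G restricted to X). Then Z \ L is contained in C and Z \ L is a closed set for player 1. -/
open Classical

universe u

open GameGraph

/-!
A player-1 state of `Z \ L` cannot have a successor outside `Z` (it would lie in `D`) nor one in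
`L` (it would be attracted to `L`). A player-2 state of `Z \ L` without a successor in `Z \ L`
has all its successors inside `X` in `L`, since those outside `Z` lie in `X \ Z ⊆ D`; so it
would be attracted to `L` as well.
-/

namespace GameGraph

variable {S : Type u} (G : GameGraph S) {X U : Set S}

lemma attrSeq1In_mono : Monotone (G.AttrSeq1In X U) :=
  monotone_nat_of_le_succ fun _ _ hs => Or.inl (Or.inl hs)

lemma subset_attr1In : U ⊆ G.Attr1In X U :=
  Set.subset_iUnion (G.AttrSeq1In X U) 0

lemma mem_attr1In_of_mem_S1 {s t : S} (hsX : s ∈ X) (hs : s ∈ G.S1) (ht : t ∈ G.E s)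
    (htU : t ∈ G.Attr1In X U) : s ∈ G.Attr1In X U := by
  obtain ⟨n, hn⟩ := Set.mem_iUnion.mp htU
  exact Set.mem_iUnion.mpr ⟨n + 1, Or.inl (Or.inr ⟨hsX, hs, t, ht, hn⟩)⟩

-- Finiteness makes all successors in `X` enter the attractor at a common stage.
lemma mem_attr1In_of_not_mem_S1 [Finite S] {s : S} (hsX : s ∈ X) (hs : s ∉ G.S1)
    (hsucc : G.E s ∩ X ⊆ G.Attr1In X U) : s ∈ G.Attr1In X U := by
  have hfin : (G.E s ∩ X).Finite := Set.toFinite _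
  obtain ⟨n, hn⟩ := G.attrSeq1In_mono.directed_le.exists_mem_subset_of_finset_subset_biUnion
    (s := hfin.toFinset) (by simpa [Attr1In] using hsucc)
  exact Set.mem_iUnion.mpr ⟨n + 1, Or.inr ⟨hsX, hs, by simpa using hn⟩⟩

theorem closed1_diff_attr1In [Finite S] {Z D : Set S} (hZX : Z ⊆ X)
    (hD : ∀ s ∈ Z ∩ G.S1, (G.E s ∩ Zᶜ).Nonempty → s ∈ D) (hXZ : X \ Z ⊆ D) :
    G.Closed1 (Z \ G.Attr1In X D) := by
  constructor
  · rintro s ⟨⟨hsZ, hsL⟩, hs⟩ t ht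
    have htZ : t ∈ Z := by
      by_contra htZ
      exact hsL (G.subset_attr1In (hD s ⟨hsZ, hs⟩ ⟨t, ht, htZ⟩))
    exact ⟨htZ, fun htL => hsL (G.mem_attr1In_of_mem_S1 (hZX hsZ) hs ht htL)⟩
  · rintro s ⟨⟨hsZ, hsL⟩, hs⟩
    by_contra hstuck
    have hsucc : G.E s ∩ X ⊆ G.Attr1In X D := by
      rintro t ⟨ht, htX⟩
      by_cases htZ : t ∈ Z
      · by_contra htL
        exact hstuck ⟨t, ht, htZ, htL⟩
      · exact G.subset_attr1In (hXZ ⟨htX, htZ⟩)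
    exact hsL (G.mem_attr1In_of_not_mem_S1 (hZX hsZ) hs hsucc)

end GameGraph

/-- `Z \ L` is contained in `C` and is a closed set for
player 1, where `L = Attr1(D, G ↾ X)`. -/
theorem ZdiffL_closed {S : Type u} [Finite S] (G : GameGraph S) (B : Set S) :
    let C : Set S := Bᶜ
    let C1 : Set S := { s | s ∈ G.S1 ∧ s ∈ C ∧ G.E s ⊆ C }
    let C2 : Set S := { s | s ∉ G.S1 ∧ s ∈ C ∧ (G.E s ∩ C).Nonempty }
    let X : Set S := G.Attr2 (C1 ∪ C2)
    let Z : Set S := X ∩ C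
    let D : Set S := { s | s ∈ G.S1 ∧ s ∈ Z ∧ (G.E s ∩ Zᶜ).Nonempty }
      ∪ { s | s ∉ G.S1 ∧ s ∈ Z ∧ G.E s ⊆ Zᶜ } ∪ (X \ Z)
    let L : Set S := G.Attr1In X D
    Z \ L ⊆ C ∧ G.Closed1 (Z \ L) := by
  intro C C1 C2 X Z D L
  refine ⟨fun s hs => hs.1.2, G.closed1_diff_attr1In Set.inter_subset_left ?_ ?_⟩
  · exact fun s ⟨hsZ, hs⟩ hout => Or.inl (Or.inl ⟨hs, hsZ, hout⟩)
  · exact fun s hs => Or.inr hs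
end

section
/- Let G be a finite game graph and B ⊆ S. If W ⊆ W2(coBuchi(S\B)) and the play reaching aspect holds, then Attr2(W,G) ⊆ W2(coBuchi(S\B)): any state from which player 2 can force reaching a player-2 co-Büchi winning set is itself winning for player 2 for the co-Büchi objective. -/
open Classical

universe u

/-!
Player 2 plays the attractor strategy, moving to a successor of least attractor level, until the
play first visits `W`, say at `t`; from then on it plays a winning strategy from `t`, treating the
history since `t` as its whole history. The attractor levels force the visit to `W`, the
remainder of the play is a play from `t` consistent with the winning strategy, and a co-Büchi
objective only depends on the suffix of a play.
-/

namespace GameGraph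

variable {S : Type u} (G : GameGraph S)

instance : Nonempty G.Strat :=
  ⟨⟨fun _ s => (G.succ_nonempty s).some, fun _ s => (G.succ_nonempty s).some_mem⟩⟩

section Play

variable (σ π : List S → S → S) (s : S)

theorem playPair_fst (n : ℕ) :
    (G.playPair σ π s n).1 = (List.range n).map (G.play σ π s) := by
  induction n with
  | zero => rfl
  | succ n ih =>
    rw [List.range_succ, List.map_append, ← ih]
    rfl

theorem play_succ (n : ℕ) :
    G.play σ π s (n + 1) =
      if G.play σ π s n ∈ G.S1 then σ ((List.range n).map (G.play σ π s)) (G.play σ π s n)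
      else π ((List.range n).map (G.play σ π s)) (G.play σ π s n) := by
  rw [← playPair_fst]
  rfl

theorem playPair_add (k j : ℕ) :
    let H := (G.playPair σ π s k).1
    let p := G.playPair (fun l => σ (H ++ l)) (fun l => π (H ++ l)) (G.play σ π s k) j
    G.playPair σ π s (k + j) = (H ++ p.1, p.2) := by
  induction j with
  | zero => simp [playPair, play]
  | succ j ih =>
    rw [← add_assoc, playPair, ih]
    simp [playPair]

theorem play_add (k j : ℕ) :
    G.play σ π s (k + j) =
      G.play (fun l => σ ((List.range k).map (G.play σ π s) ++ l))
        (fun l => π ((List.range k).map (G.play σ π s) ++ l)) (G.play σ π s k) j := by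
  rw [← playPair_fst, play, playPair_add]
  rfl

theorem play_congr_right {π₁ π₂ : List S → S → S}
    (h : ∀ l u, (l ++ [u]).head? = some s → π₁ l u = π₂ l u) :
    G.play σ π₁ s = G.play σ π₂ s := by
  suffices hpair : ∀ n, G.playPair σ π₁ s n = G.playPair σ π₂ s n from
    funext fun n => congrArg Prod.snd (hpair n)
  intro n
  induction n with
  | zero => rfl
  | succ n ih =>
    have hhead : ((G.playPair σ π₁ s n).1 ++ [(G.playPair σ π₁ s n).2]).head? = some s := by
      change (G.playPair σ π₁ s (n + 1)).1.head? = some s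
      rw [playPair_fst, List.range_succ_eq_map]
      rfl
    simp only [playPair, ← ih, h _ _ hhead]

end Play

section Attractor

variable (W : Set S) {s : S}

theorem attrSeq2_monotone : Monotone (G.AttrSeq2 W) :=
  monotone_nat_of_le_succ fun _ _ hx => Or.inl (Or.inl hx)

theorem E_subset_attrSeq2 {m : ℕ} (hs : s ∈ G.AttrSeq2 W (m + 1)) (hsW : s ∉ W)
    (h1 : s ∈ G.S1) : G.E s ⊆ G.AttrSeq2 W m := by
  induction m with
  | zero =>
    rcases hs with (h | h) | h
    exacts [absurd h hsW, absurd h1 h.1, h.2]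
  | succ m ih =>
    rcases hs with (h | h) | h
    · exact (ih h).trans (G.attrSeq2_monotone W m.le_succ)
    · exact absurd h1 h.1
    · exact h.2

theorem E_inter_attrSeq2_nonempty {m : ℕ} (hs : s ∈ G.AttrSeq2 W (m + 1)) (hsW : s ∉ W)
    (h1 : s ∉ G.S1) : (G.E s ∩ G.AttrSeq2 W m).Nonempty := by
  induction m with
  | zero =>
    rcases hs with (h | h) | h
    exacts [absurd h hsW, h.2, absurd h.1 h1]
  | succ m ih =>
    rcases hs with (h | h) | h
    · exact (ih h).mono (Set.inter_subset_inter_right _ (G.attrSeq2_monotone W m.le_succ))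
    · exact h.2
    · exact absurd h.1 h1

noncomputable def attrMove (s : S) : S :=
  if h : ∃ m, (G.E s ∩ G.AttrSeq2 W m).Nonempty then (Nat.find_spec h).some
  else (G.succ_nonempty s).some

theorem attrMove_mem_E : G.attrMove W s ∈ G.E s := by
  unfold attrMove
  split_ifs with h
  exacts [(Nat.find_spec h).some_mem.1, (G.succ_nonempty s).some_mem]

theorem attrMove_mem_attrSeq2 {m : ℕ} (h : (G.E s ∩ G.AttrSeq2 W m).Nonempty) :
    G.attrMove W s ∈ G.AttrSeq2 W m := by
  have hex : ∃ m, (G.E s ∩ G.AttrSeq2 W m).Nonempty := ⟨m, h⟩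
  rw [attrMove, dif_pos hex]
  exact G.attrSeq2_monotone W (Nat.find_min' hex h) (Nat.find_spec hex).some_mem.2

theorem exists_play_mem_of_mem_attr2 (σ : G.Strat) {π : List S → S → S}
    (hπ : ∀ l u, (∀ x ∈ l ++ [u], x ∉ W) → π l u = G.attrMove W u)
    (hs : s ∈ G.Attr2 W) : ∃ k, G.play σ.1 π s k ∈ W := by
  obtain ⟨n, hn⟩ := Set.mem_iUnion.1 hs
  by_contra! hout
  have hlevel : ∀ i ≤ n, G.play σ.1 π s i ∈ G.AttrSeq2 W (n - i) := by
    intro i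
    induction i with
    | zero => exact fun _ => hn
    | succ i ih =>
      intro hi
      obtain ⟨m, hm⟩ : ∃ m, n - i = m + 1 := ⟨n - i - 1, by omega⟩
      have hωi := ih (by omega)
      rw [hm] at hωi
      rw [show n - (i + 1) = m by omega, play_succ]
      split_ifs with h1
      · exact G.E_subset_attrSeq2 W hωi (hout i) h1 (σ.2 _ _)
      · have hhist :
            ∀ x ∈ (List.range i).map (G.play σ.1 π s) ++ [G.play σ.1 π s i], x ∉ W := by
          simp only [List.mem_append, List.mem_map, List.mem_singleton]
          rintro x (⟨a, -, rfl⟩ | rfl) <;> exact hout _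
        rw [hπ _ _ hhist]
        exact G.attrMove_mem_attrSeq2 W (G.E_inter_attrSeq2_nonempty W hωi (hout i) h1)
  have hfinal := hlevel n le_rfl
  rw [Nat.sub_self] at hfinal
  exact hout n hfinal

end Attractor

section Switch

variable {W : Set S} {f : S → S} {τ : S → List S → S → S}

/-- Play `f` until `W` is first visited, at `t`; from then on play `τ t`, on the history
since `t`. -/
noncomputable def switchOnReach (W : Set S) (f : S → S) (τ : S → List S → S → S)
    (l : List S) (s : S) : S :=
  match (l ++ [s]).dropWhile (fun x => decide (x ∉ W)) with
  | [] => f s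
  | t :: rest => τ t (t :: rest).dropLast s

theorem switchOnReach_of_forall_not_mem {l : List S} {s : S} (h : ∀ x ∈ l ++ [s], x ∉ W) :
    switchOnReach W f τ l s = f s := by
  rw [switchOnReach, List.dropWhile_eq_nil_iff.2 (by simpa using h)]

theorem switchOnReach_append {H l : List S} {t u : S} (hH : ∀ x ∈ H, x ∉ W) (ht : t ∈ W)
    (hl : (l ++ [u]).head? = some t) :
    switchOnReach W f τ (H ++ l) u = τ t l u := by
  obtain ⟨rest, hrest⟩ := List.head?_eq_some_iff.1 hl
  have hdrop : (H ++ l ++ [u]).dropWhile (fun x => decide (x ∉ W)) = t :: rest := by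
    rw [List.append_assoc, List.dropWhile_append_of_pos (by simpa using hH), hrest,
      List.dropWhile_cons_of_neg (by simpa using ht)]
  rw [switchOnReach, hdrop]
  simp only [← hrest, List.dropLast_concat]

theorem switchOnReach_mem_E (hf : ∀ s, f s ∈ G.E s) (hτ : ∀ t l s, τ t l s ∈ G.E s)
    (l : List S) (s : S) : switchOnReach W f τ l s ∈ G.E s := by
  unfold switchOnReach
  split
  exacts [hf s, hτ _ _ s]

end Switch

theorem attr2_subset_W2 (W : Set S) {Ψ : Set (ℕ → S)}
    (hΨ : ∀ ω k, (fun j => ω (k + j)) ∈ Ψ → ω ∈ Ψ) (hW : W ⊆ G.W2 Ψ) :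
    G.Attr2 W ⊆ G.W2 Ψ := by
  have hW' : ∀ t ∈ W, ∃ π : G.Strat, ∀ σ : G.Strat, G.play σ.1 π.1 t ∈ Ψ := hW
  choose! τ hτ using hW'
  intro s hs
  let π := switchOnReach W (G.attrMove W) (fun t => (τ t).1)
  refine ⟨⟨π, switchOnReach_mem_E G (fun _ => G.attrMove_mem_E W) fun t => (τ t).2⟩,
    fun σ => ?_⟩
  have hreach : ∃ k, G.play σ.1 π s k ∈ W :=
    G.exists_play_mem_of_mem_attr2 W σ (fun _ _ => switchOnReach_of_forall_not_mem) hs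
  set k := Nat.find hreach
  set H := (List.range k).map (G.play σ.1 π s)
  have htW : G.play σ.1 π s k ∈ W := Nat.find_spec hreach
  have hH : ∀ x ∈ H, x ∉ W := by
    simp only [H, List.mem_map, List.mem_range]
    rintro _ ⟨i, hi, rfl⟩
    exact Nat.find_min hreach hi
  refine hΨ _ k ?_
  rw [funext (G.play_add σ.1 π s k),
    G.play_congr_right _ _ fun l u hl => switchOnReach_append hH htW hl]
  exact hτ _ htW ⟨fun l => σ.1 (H ++ l), fun l => σ.2 (H ++ l)⟩

theorem infOcc_subset_infOcc_shift (ω : ℕ → S) (k : ℕ) :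
    InfOcc ω ⊆ InfOcc (fun j => ω (k + j)) := by
  intro x hx N
  obtain ⟨m, hm, rfl⟩ := hx (N + k)
  exact ⟨m - k, by omega, by simp only [Nat.add_sub_cancel' (show k ≤ m by omega)]⟩

theorem mem_coBuchi_of_shift {C : Set S} {ω : ℕ → S} {k : ℕ}
    (h : (fun j => ω (k + j)) ∈ coBuchi C) : ω ∈ coBuchi C :=
  (infOcc_subset_infOcc_shift ω k).trans h

end GameGraph

open GameGraph

theorem attr2_W2_coBuchi_general {S : Type u} (G : GameGraph S)
    (B W : Set S) (hW : W ⊆ G.W2 (coBuchi Bᶜ)) :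
    G.Attr2 W ⊆ G.W2 (coBuchi Bᶜ) :=
  G.attr2_subset_W2 W (fun _ _ => mem_coBuchi_of_shift) hW

/-- the player-2 attractor of a subset of player 2's co-Büchi
winning set is again contained in that winning set. -/
theorem attr2_W2_coBuchi {S : Type u} [Finite S] (G : GameGraph S)
    (B W : Set S) (hW : W ⊆ G.W2 (coBuchi Bᶜ)) :
    G.Attr2 W ⊆ G.W2 (coBuchi Bᶜ) :=
  attr2_W2_coBuchi_general G B W hW
end
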